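/- arXiv:1609.00084 — 2 statements merged into one kernel-verified Lean document; each statement's English description precedes it below -/
import Mathlib

section
/- (Perturbation of zeros) Let f and g be entire functions, B, ρ ≥ 1. Suppose f has at most M > 0 zeros (with multiplicity) in the disk D(0, 2Bρ), let 0 < γ < ρ/(2M), and assume max_{|z|≤2Bρ}|g(z)| < min{|f(z)| : z ∈ D(0,2Bρ), dist(z, zeros of f in D(0,2Bρ)) ≥ γ}. Then for every ρ′ ∈ (2Mγ, 2Bρ − 2Mγ), n_{f+g}(ρ′ − 2Mγ) ≤ n_f(ρ′) ≤ n_{f+g}(ρ′ + 2Mγ), where n_h(t) denotes the number of zeros of h in the closed disk of radius t. -/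
open Metric

/-- The number of zeros (with multiplicity) of an entire function `f` in a set `s`,
as a value in `ENNReal`: the sum over the points of `s` of the vanishing order of `f`. -/
noncomputable def zeroCount (f : ℂ → ℂ) (hf : Differentiable ℂ f) (s : Set ℂ) : ENNReal :=
  ∑' z : s, (analyticOrderAt f z).toENNReal

/-!
On a circle `|z| = r` at distance at least `γ` from every zero of `f` in `D(0, 2Bρ)` the
hypothesis gives `|g| < |f|`, so by Rouché's theorem `f` and `f + g` have equally many zeros in
the disk of radius `r`. Rouché's theorem is derived from the argument principle, proved by
dividing out one zero at a time; the two logarithmic derivatives have the same circle integral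
because `log ((f + g) / f)` is a primitive of their difference, `(f + g) / f` staying in the disk
`D(1, 1)` on the circle. Since `f` has at most `M` zeros, the bad radii lie in at most `M` open
intervals of length `2γ`, so every interval of radii of length `2Mγ` contains a good radius;
comparing with `ρ' ∓ 2Mγ` through monotonicity of the zero count gives both inequalities.
-/

open Complex Filter Set Real

section ZeroCount

variable {f : ℂ → ℂ} {s t : Set ℂ}

theorem zeroCount_mono (hf : Differentiable ℂ f) (hst : s ⊆ t) :
    zeroCount f hf s ≤ zeroCount f hf t :=
  ENNReal.tsum_mono_subtype (fun z => (analyticOrderAt f z).toENNReal) hst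

theorem zeroCount_eq_zero_iff (hf : Differentiable ℂ f) :
    zeroCount f hf s = 0 ↔ ∀ z ∈ s, f z ≠ 0 := by
  simp [zeroCount, ENNReal.tsum_eq_zero, (hf.analyticAt _).analyticOrderAt_eq_zero]

theorem encard_zeros_le_zeroCount (hf : Differentiable ℂ f) :
    ({z ∈ s | f z = 0}.encard : ENNReal) ≤ zeroCount f hf s := by
  rw [← ENNReal.tsum_set_one]
  calc ∑' _ : {z ∈ s | f z = 0}, (1 : ENNReal)
      ≤ ∑' z : {z ∈ s | f z = 0}, (analyticOrderAt f z).toENNReal := by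
        refine ENNReal.tsum_le_tsum fun z => ?_
        rw [← ENat.toENNReal_one, ENat.toENNReal_le, Order.one_le_iff_ne_zero,
          (hf.analyticAt _).analyticOrderAt_ne_zero]
        exact z.2.2
    _ ≤ zeroCount f hf s := zeroCount_mono hf fun _ hz => hz.1

theorem zeroCount_sub_mul (hf : Differentiable ℂ f) (a : ℂ)
    (haf : Differentiable ℂ fun z => (z - a) * f z) :
    zeroCount (fun z => (z - a) * f z) haf s = zeroCount f hf s + s.indicator 1 a := by
  have horder (z : ℂ) : analyticOrderAt (fun z => (z - a) * f z) z =
      analyticOrderAt f z + if z = a then 1 else 0 := by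
    change analyticOrderAt ((· - a) * f) z = _
    rw [analyticOrderAt_mul (by fun_prop) (hf.analyticAt z), add_comm]
    split_ifs with h
    · subst h; simp
    · simp [h]
  simp only [zeroCount, horder, ENat.toENNReal_add, ENNReal.tsum_add]
  congr 1
  rw [tsum_subtype s fun z => ((if z = a then 1 else 0 : ℕ∞) : ENNReal)]
  refine (tsum_eq_single a fun z hz => ?_).trans ?_
  · simp [hz]
  · by_cases ha : a ∈ s <;> simp [ha]

theorem exists_zeroCount_eq_natCast (hf : Differentiable ℂ f) {z₀ : ℂ} (hz₀ : f z₀ ≠ 0)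
    {K : Set ℂ} (hK : IsCompact K) : ∃ N : ℕ, zeroCount f hf K = N := by
  have hfin : (K \ f ⁻¹' {0}ᶜ).Finite :=
    hK.finite_sdiff_of_mem_codiscreteWithin <| codiscreteWithin_mono (subset_univ K) <|
      AnalyticOnNhd.preimage_zero_mem_codiscrete (fun z _ => hf.analyticAt z) hz₀
  have hne_top (z : ℂ) : analyticOrderAt f z ≠ ⊤ := fun h =>
    hz₀ (congrFun ((AnalyticOnNhd.analyticOrderAt_eq_top_iff_eq_zero z hf.analyticAt).1 h) z₀)
  rw [zeroCount, tsum_subtype K fun z => (analyticOrderAt f z).toENNReal,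
    tsum_eq_sum (s := hfin.toFinset) fun z hz => ?_]
  · refine ⟨∑ z ∈ hfin.toFinset, (K.indicator (analyticOrderAt f) z).toNat, ?_⟩
    push_cast
    refine Finset.sum_congr rfl fun z _ => ?_
    by_cases hzK : z ∈ K <;> simp [hzK, ← ENat.toENNReal_coe, ENat.natCast_toNat (hne_top z)]
  · by_cases hzK : z ∈ K
    · simp_all [(hf.analyticAt z).analyticOrderAt_eq_zero]
    · simp [hzK]

end ZeroCount

theorem Differentiable.exists_eq_sub_mul {f : ℂ → ℂ} (hf : Differentiable ℂ f) {a : ℂ}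
    (ha : f a = 0) : ∃ f₁ : ℂ → ℂ, Differentiable ℂ f₁ ∧ f = fun z => (z - a) * f₁ z := by
  refine ⟨dslope f a, differentiableOn_univ.1 <|
    (differentiableOn_dslope univ_mem).2 hf.differentiableOn, funext fun z => ?_⟩
  simpa [ha] using (sub_smul_dslope f a z).symm

section NormLt

variable {E : Type*} [SeminormedAddCommGroup E] {a b : E}

theorem ne_zero_of_norm_lt (h : ‖b‖ < ‖a‖) : a ≠ 0 :=
  ne_zero_of_norm_ne_zero ((norm_nonneg b).trans_lt h).ne'

theorem add_ne_zero_of_norm_lt (h : ‖b‖ < ‖a‖) : a + b ≠ 0 := fun hab =>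
  h.ne (by rw [eq_neg_of_add_eq_zero_left hab, norm_neg])

end NormLt

section Rouche

variable {f g : ℂ → ℂ} {c : ℂ} {r : ℝ}

theorem circleIntegrable_logDeriv (hf : Differentiable ℂ f) (hr : 0 ≤ r)
    (hsph : ∀ z ∈ sphere c r, f z ≠ 0) : CircleIntegrable (logDeriv f) c r :=
  (hf.deriv.continuous.continuousOn.div hf.continuous.continuousOn hsph).circleIntegrable hr

theorem circleIntegral_logDeriv_eq_of_zeroCount_eq (hf : Differentiable ℂ f) (hr : 0 ≤ r)
    (hsph : ∀ z ∈ sphere c r, f z ≠ 0) {N : ℕ} (hN : zeroCount f hf (closedBall c r) = N) :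
    (∮ z in C(c, r), logDeriv f z) = 2 * π * I * N := by
  induction N generalizing f with
  | zero =>
    have hball : ∀ z ∈ closedBall c r, f z ≠ 0 :=
      (zeroCount_eq_zero_iff hf).1 (mod_cast hN)
    rw [Nat.cast_zero, mul_zero]
    have hd : DifferentiableOn ℂ (logDeriv f) (closedBall c r) := fun z hz =>
      (hf.deriv z |>.div (hf z) (hball z hz)).differentiableWithinAt
    exact DiffContOnCl.circleIntegral_eq_zero hr (hd.diffContOnCl_ball subset_rfl)
  | succ N ih =>
    obtain ⟨a, ha_mem, ha⟩ : ∃ a ∈ closedBall c r, f a = 0 := by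
      by_contra! h
      rw [(zeroCount_eq_zero_iff hf).2 h] at hN
      exact Nat.cast_ne_zero.2 N.succ_ne_zero hN.symm
    have ha_ball : a ∈ ball c r :=
      (mem_closedBall.1 ha_mem).lt_of_ne fun h => hsph a (mem_sphere.2 h) ha
    obtain ⟨f₁, hf₁, rfl⟩ := hf.exists_eq_sub_mul ha
    have hsph_a : ∀ z ∈ sphere c r, z - a ≠ 0 := fun z hz h => hsph z hz (by simp [h])
    have hsph₁ : ∀ z ∈ sphere c r, f₁ z ≠ 0 := fun z hz h => hsph z hz (by simp [h])
    have hN₁ : zeroCount f₁ hf₁ (closedBall c r) = N := by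
      rw [zeroCount_sub_mul hf₁ a hf, indicator_of_mem ha_mem, Pi.one_apply,
        Nat.cast_succ] at hN
      exact (ENNReal.add_left_inj ENNReal.one_ne_top).1 hN
    calc (∮ z in C(c, r), logDeriv (fun z => (z - a) * f₁ z) z)
        = ∮ z in C(c, r), ((z - a)⁻¹ + logDeriv f₁ z) :=
          circleIntegral.integral_congr hr fun z hz => by
            rw [logDeriv_mul z (hsph_a z hz) (hsph₁ z hz) (by fun_prop) (hf₁ z)]
            simp [logDeriv_apply]
      _ = (∮ z in C(c, r), (z - a)⁻¹) + ∮ z in C(c, r), logDeriv f₁ z :=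
          circleIntegral.integral_add
            (circleIntegrable_sub_inv_iff.2 (.inr fun h =>
              (mem_ball.1 ha_ball).ne ((mem_sphere.1 h).trans (abs_of_nonneg hr))))
            (circleIntegrable_logDeriv hf₁ hr hsph₁)
      _ = 2 * π * I * (N + 1 : ℕ) := by
          rw [circleIntegral.integral_sub_inv_of_mem_ball ha_ball, ih hf₁ hsph₁ hN₁]
          push_cast
          ring

theorem circleIntegral_logDeriv_add_eq (hf : Differentiable ℂ f) (hg : Differentiable ℂ g)
    (hr : 0 ≤ r) (hlt : ∀ z ∈ sphere c r, ‖g z‖ < ‖f z‖) :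
    (∮ z in C(c, r), logDeriv (f + g) z) = ∮ z in C(c, r), logDeriv f z := by
  have hf0 : ∀ z ∈ sphere c r, f z ≠ 0 := fun z hz => ne_zero_of_norm_lt (hlt z hz)
  have hfg0 : ∀ z ∈ sphere c r, (f + g) z ≠ 0 := fun z hz => add_ne_zero_of_norm_lt (hlt z hz)
  have hprim : ∀ z ∈ sphere c r, HasDerivAt (fun w => log ((f + g) w / f w))
      (logDeriv (f + g) z - logDeriv f z) z := by
    intro z hz
    have hslit : (f + g) z / f z ∈ slitPlane := by
      have h : (f + g) z / f z = 1 + g z / f z := by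
        field_simp [hf0 z hz]
        simp [Pi.add_apply]
      rw [h]
      refine mem_slitPlane_of_norm_lt_one ?_
      rw [norm_div, div_lt_one (norm_pos_iff.2 (hf0 z hz))]
      exact hlt z hz
    have hd : DifferentiableAt ℂ (fun w => (f + g) w / f w) z :=
      ((hf.add hg) z).div (hf z) (hf0 z hz)
    refine ((hasStrictDerivAt_log hslit).hasDerivAt.comp z hd.hasDerivAt).congr_deriv ?_
    rw [← logDeriv_div z (hfg0 z hz) (hf0 z hz) ((hf.add hg) z) (hf z), logDeriv_apply,
      inv_mul_eq_div]
  have hzero := circleIntegral.integral_eq_zero_of_hasDerivWithinAt hr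
    fun z hz => (hprim z hz).hasDerivWithinAt
  rwa [circleIntegral.integral_sub (circleIntegrable_logDeriv (hf.add hg) hr hfg0)
    (circleIntegrable_logDeriv hf hr hf0), sub_eq_zero] at hzero

theorem zeroCount_add_eq_of_norm_lt (hf : Differentiable ℂ f) (hg : Differentiable ℂ g)
    (hr : 0 ≤ r) (hlt : ∀ z ∈ sphere c r, ‖g z‖ < ‖f z‖) :
    zeroCount (f + g) (hf.add hg) (closedBall c r) = zeroCount f hf (closedBall c r) := by
  have hc : c + r ∈ sphere c r := by simp [abs_of_nonneg hr]
  obtain ⟨N, hN⟩ := exists_zeroCount_eq_natCast hf (ne_zero_of_norm_lt (hlt _ hc))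
    (isCompact_closedBall c r)
  obtain ⟨N', hN'⟩ := exists_zeroCount_eq_natCast (hf.add hg)
    (add_ne_zero_of_norm_lt (hlt _ hc)) (isCompact_closedBall c r)
  have h := circleIntegral_logDeriv_add_eq hf hg hr hlt
  rw [circleIntegral_logDeriv_eq_of_zeroCount_eq (hf.add hg) hr
      (fun z hz => add_ne_zero_of_norm_lt (hlt z hz)) hN',
    circleIntegral_logDeriv_eq_of_zeroCount_eq hf hr
      (fun z hz => ne_zero_of_norm_lt (hlt z hz)) hN] at h
  rw [hN, hN', Nat.cast_injective (R := ℂ) (mul_left_cancel₀ two_pi_I_ne_zero h)]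

end Rouche

open Finset in
theorem exists_mem_Icc_forall_le_abs_sub (s : Finset ℝ) (c : ℝ) {γ : ℝ} (hγ : 0 ≤ γ) :
    ∃ r ∈ Icc c (c + 2 * #s * γ), ∀ t ∈ s, γ ≤ |r - t| := by
  by_contra! h
  choose! τ hτs hτ using h
  -- pigeonhole: the `#s + 1` points `c + 2iγ` are `2γ` apart, so no two lie within `γ` of one `t`
  have hp : ∀ i ∈ range (#s + 1), c + 2 * i * γ ∈ Icc c (c + 2 * #s * γ) := by
    intro i hi
    have : (i : ℝ) ≤ #s := by exact_mod_cast Nat.lt_succ_iff.1 (mem_range.1 hi)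
    constructor <;> nlinarith
  obtain ⟨i, hi, j, hj, hij, hτij⟩ := exists_ne_map_eq_of_card_lt_of_maps_to
    (by simp) (f := fun i : ℕ => τ (c + 2 * i * γ)) fun i hi => hτs _ (hp i hi)
  have hgap {i j : ℕ} (h : i < j) : 2 * γ ≤ (c + 2 * j * γ) - (c + 2 * i * γ) := by
    have : (i : ℝ) + 1 ≤ j := by exact_mod_cast h
    nlinarith
  have hi' := abs_lt.1 (hτ _ (hp i hi))
  have hj' := abs_lt.1 (hτ _ (hp j hj))
  rw [hτij] at hi'
  rcases hij.lt_or_gt with h | h <;> linarith [hgap h]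

theorem lt_of_sSup_image_lt_sInf_image {α : Type*} {u v : α → ℝ} {K S : Set α}
    (hu : BddAbove (u '' K)) (hv : BddBelow (v '' S)) (h : sSup (u '' K) < sInf (v '' S))
    {x : α} (hxK : x ∈ K) (hxS : x ∈ S) : u x < v x :=
  (le_csSup hu (mem_image_of_mem u hxK)).trans_lt
    (h.trans_le (csInf_le hv (mem_image_of_mem v hxS)))

theorem exists_radius_zeroCount_add_eq {f g : ℂ → ℂ} (hf : Differentiable ℂ f)
    (hg : Differentiable ℂ g) {R : ℝ} {M : ℕ} (hzeros : zeroCount f hf (ball 0 R) ≤ M)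
    {γ : ℝ} (hγ : 0 ≤ γ)
    (hdom : sSup ((fun z => ‖g z‖) '' closedBall (0 : ℂ) R) <
      sInf ((fun z => ‖f z‖) '' {z : ℂ | z ∈ ball (0 : ℂ) R ∧
        ∀ w ∈ ball (0 : ℂ) R, f w = 0 → γ ≤ dist z w}))
    {c : ℝ} (hc : 0 ≤ c) (hcR : c + 2 * M * γ < R) :
    ∃ r ∈ Icc c (c + 2 * M * γ),
      zeroCount (f + g) (hf.add hg) (closedBall 0 r) = zeroCount f hf (closedBall 0 r) := by
  set Z := {z ∈ ball (0 : ℂ) R | f z = 0}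
  have hZ : Z.encard ≤ M := by
    have h := (encard_zeros_le_zeroCount hf).trans hzeros
    rwa [← ENat.toENNReal_coe, ENat.toENNReal_le] at h
  have hZfin : Z.Finite := finite_of_encard_le_coe hZ
  set s := hZfin.toFinset.image (‖·‖)
  have hs : (s.card : ℝ) ≤ M := by
    rw [hZfin.encard_eq_coe_toFinset_card] at hZ
    exact_mod_cast Finset.card_image_le.trans (mod_cast hZ)
  obtain ⟨r, hr, hfar⟩ := exists_mem_Icc_forall_le_abs_sub s c hγ
  have hr' : r ∈ Icc c (c + 2 * M * γ) := ⟨hr.1, hr.2.trans (by gcongr)⟩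
  refine ⟨r, hr', zeroCount_add_eq_of_norm_lt hf hg (hc.trans hr.1) fun z hz => ?_⟩
  have hzr : ‖z‖ = r := mem_sphere_zero_iff_norm.1 hz
  have hzR : ‖z‖ < R := by linarith [hr'.2]
  refine lt_of_sSup_image_lt_sInf_image
    ((isCompact_closedBall 0 R).image_of_continuousOn hg.continuous.norm.continuousOn).bddAbove
    ⟨0, by rintro _ ⟨z, -, rfl⟩; exact norm_nonneg _⟩ hdom
    (mem_closedBall_zero_iff.2 hzR.le) ⟨mem_ball_zero_iff.2 hzR, fun w hw hfw => ?_⟩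
  calc γ ≤ |r - ‖w‖| :=
        hfar _ (Finset.mem_image_of_mem _ (hZfin.mem_toFinset.2 ⟨hw, hfw⟩))
    _ ≤ dist z w := hzr ▸ (abs_norm_sub_norm_le z w).trans_eq (dist_eq_norm z w).symm

theorem zero_perturbation_general (f g : ℂ → ℂ) (hf : Differentiable ℂ f) (hg : Differentiable ℂ g)
    (B ρ : ℝ) (M : ℕ)
    (hzeros : zeroCount f hf (ball 0 (2 * B * ρ)) ≤ M)
    (γ : ℝ) (hγ0 : 0 < γ)
    (hdom :
      sSup ((fun z => ‖g z‖) '' closedBall (0 : ℂ) (2 * B * ρ)) <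
        sInf ((fun z => ‖f z‖) ''
          {z : ℂ | z ∈ ball (0 : ℂ) (2 * B * ρ) ∧
            ∀ w ∈ ball (0 : ℂ) (2 * B * ρ), f w = 0 → γ ≤ dist z w})) :
    ∀ ρ' ∈ Set.Ioo (2 * M * γ) (2 * B * ρ - 2 * M * γ),
      zeroCount (f + g) (hf.add hg) (closedBall 0 (ρ' - 2 * M * γ)) ≤
          zeroCount f hf (closedBall 0 ρ') ∧
        zeroCount f hf (closedBall 0 ρ') ≤
          zeroCount (f + g) (hf.add hg) (closedBall 0 (ρ' + 2 * M * γ)) := by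
  rintro ρ' ⟨hρ'_lo, hρ'_hi⟩
  have hMγ : 0 ≤ 2 * (M : ℝ) * γ := by positivity
  obtain ⟨r₁, hr₁, hr₁_eq⟩ := exists_radius_zeroCount_add_eq hf hg hzeros hγ0.le hdom
    (c := ρ' - 2 * M * γ) (by linarith) (by linarith)
  obtain ⟨r₂, hr₂, hr₂_eq⟩ := exists_radius_zeroCount_add_eq hf hg hzeros hγ0.le hdom
    (c := ρ') (by linarith) (by linarith)
  constructor
  · calc _ ≤ zeroCount (f + g) (hf.add hg) (closedBall 0 r₁) :=
          zeroCount_mono _ (closedBall_subset_closedBall hr₁.1)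
      _ = zeroCount f hf (closedBall 0 r₁) := hr₁_eq
      _ ≤ _ := zeroCount_mono _ (closedBall_subset_closedBall (by linarith [hr₁.2]))
  · calc _ ≤ zeroCount f hf (closedBall 0 r₂) :=
          zeroCount_mono _ (closedBall_subset_closedBall hr₂.1)
      _ = zeroCount (f + g) (hf.add hg) (closedBall 0 r₂) := hr₂_eq.symm
      _ ≤ _ := zeroCount_mono _ (closedBall_subset_closedBall hr₂.2)

/-- Perturbation of zeros: let `f, g` be entire, `B, ρ ≥ 1`, suppose `f` has at most
`M > 0` zeros (with multiplicity) in `D(0, 2Bρ)`, let `0 < γ < ρ/(2M)`, and assume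
`max_{|z| ≤ 2Bρ}|g| < min{|f(z)| : z ∈ D(0,2Bρ), dist(z, zeros of f in D(0,2Bρ)) ≥ γ}`.
Then for every `ρ′ ∈ (2Mγ, 2Bρ − 2Mγ)`,
`n_{f+g}(ρ′ − 2Mγ) ≤ n_f(ρ′) ≤ n_{f+g}(ρ′ + 2Mγ)` for closed disks of those radii. -/
theorem zero_perturbation (f g : ℂ → ℂ) (hf : Differentiable ℂ f) (hg : Differentiable ℂ g)
    (B ρ : ℝ) (hB : 1 ≤ B) (hρ : 1 ≤ ρ) (M : ℕ) (hM : 0 < M)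
    (hzeros : zeroCount f hf (ball 0 (2 * B * ρ)) ≤ M)
    (γ : ℝ) (hγ0 : 0 < γ) (hγ : γ < ρ / (2 * M))
    (hdom :
      sSup ((fun z => ‖g z‖) '' closedBall (0 : ℂ) (2 * B * ρ)) <
        sInf ((fun z => ‖f z‖) ''
          {z : ℂ | z ∈ ball (0 : ℂ) (2 * B * ρ) ∧
            ∀ w ∈ ball (0 : ℂ) (2 * B * ρ), f w = 0 → γ ≤ dist z w})) :
    ∀ ρ' ∈ Set.Ioo (2 * M * γ) (2 * B * ρ - 2 * M * γ),
      zeroCount (f + g) (hf.add hg) (closedBall 0 (ρ' - 2 * M * γ)) ≤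
          zeroCount f hf (closedBall 0 ρ') ∧
        zeroCount f hf (closedBall 0 ρ') ≤
          zeroCount (f + g) (hf.add hg) (closedBall 0 (ρ' + 2 * M * γ)) :=
  zero_perturbation_general f g hf hg B ρ M hzeros γ hγ0 hdom
end

section
/- Let α > 0, p ∈ [0,1), and let q ∈ (1, α) satisfy q(log q − 1) = p(log p − 1) (with q = e when p = 0). Let ν be a radially symmetric probability measure on ℂ with compact support such that ν(open unit disk) ≤ p/α, and define B_α(ν) = 2 sup_{w∈ℂ}{U_ν(w) − |w|²/(2α)} and g_ν(z) = U_ν(z) − |z|²/(2α) − B_α(ν)/2. Then for every z with |z| = 1, g_ν(z) ≤ q(1 − log q)/(2α) − 1/(2α). -/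
open MeasureTheory

/-- The logarithmic potential `U_ν(z) = ∫ log|z−w| dν(w)` of a measure on `ℂ`. -/
noncomputable def logPot (σ : Measure ℂ) (z : ℂ) : ℝ :=
  ∫ w, Real.log ‖z - w‖ ∂σ

/-!
Averaging `log ‖z - w‖` over the circle `‖z‖ = r` gives `log (max r ‖w‖)`, so for a
rotation-invariant `ν` Fubini yields `U_ν(r) = ∫ log (max r ‖w‖) dν(w)`. The integrands at
`r = 1` and `r = √p` differ only on the unit disk, by at most `-log √p`, hence
`U_ν(1) - U_ν(√p) ≤ (p/α) · (-log √p)`. Bounding the supremum in `g_ν` from below by its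
value `U_ν(√p) - p/(2α)` at `√p` gives `g_ν(z) ≤ p(1 - log p)/(2α) - 1/(2α)`, which is the
claim because `p(1 - log p) = q(1 - log q)`. For `p = 0` the disk is `ν`-null and one compares
with `w = 0` instead. The supremum is finite because `U_ν` grows like `log⁺ ‖w‖`.
-/

open Metric Real

def IsRotationInvariant (ν : Measure ℂ) : Prop :=
  ∀ θ : ℝ, Measure.map (fun w => Complex.exp (θ * Complex.I) * w) ν = ν

theorem circleAverage_log_norm_sub_const_eq_log_max {r : ℝ} (hr : 0 < r) (a : ℂ) :
    circleAverage (log ‖· - a‖) 0 r = log (max r ‖a‖) := by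
  rw [circleAverage_log_norm_sub_const_eq_log_radius_add_posLog hr.ne', zero_sub, norm_neg,
    posLog_eq_log_max_one (by positivity), ← log_mul hr.ne' (by positivity),
    mul_max_of_nonneg _ _ hr.le, mul_one, mul_inv_cancel_left₀ hr.ne']

namespace IsRotationInvariant

variable {ν : Measure ℂ}

theorem integral_comp_norm_sub {E : Type*} [NormedAddCommGroup E] [NormedSpace ℝ E]
    (hν : IsRotationInvariant ν) (g : ℝ → E) (θ : ℝ) (z : ℂ) :
    ∫ w, g ‖Complex.exp (θ * Complex.I) * z - w‖ ∂ν = ∫ w, g ‖z - w‖ ∂ν := by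
  conv_lhs => rw [← hν θ]
  rw [(measurableEmbedding_mulLeft₀ (Complex.exp_ne_zero _)).integral_map]
  simp_rw [← mul_sub, norm_mul, Complex.norm_exp_ofReal_mul_I, one_mul]

theorem logPot_eq_logPot_norm (hν : IsRotationInvariant ν) (z : ℂ) :
    logPot ν z = logPot ν ‖z‖ := by
  conv_lhs => rw [← Complex.norm_mul_exp_arg_mul_I z, mul_comm]
  exact hν.integral_comp_norm_sub log _ _

theorem integrable_log_norm_circleMap_sub [SFinite ν] (hν : IsRotationInvariant ν)
    (hint : ∀ z : ℂ, Integrable (fun w => log ‖z - w‖) ν) (r : ℝ) :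
    Integrable (Function.uncurry fun θ w => log ‖circleMap 0 r θ - w‖)
      ((volume.restrict (Set.Ioc 0 (2 * π))).prod ν) := by
  have hmeas : Measurable (Function.uncurry fun θ w => log ‖circleMap 0 r θ - w‖) := by
    fun_prop
  refine (integrable_prod_iff hmeas.aestronglyMeasurable).2
    ⟨ae_of_all _ fun θ => hint (circleMap 0 r θ),
      (integrable_const (∫ w, ‖log ‖(r : ℂ) - w‖‖ ∂ν)).congr ?_⟩
  refine ae_of_all _ fun θ => ?_
  simp only [circleMap, zero_add, mul_comm (r : ℂ)]
  exact (hν.integral_comp_norm_sub (‖log ·‖) θ r).symm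

theorem circleAverage_logPot_eq_integral [SFinite ν] (hν : IsRotationInvariant ν)
    (hint : ∀ z : ℂ, Integrable (fun w => log ‖z - w‖) ν) (r : ℝ) :
    circleAverage (logPot ν) 0 r = ∫ w, circleAverage (log ‖· - w‖) 0 r ∂ν := by
  simp only [circleAverage_def, logPot, smul_eq_mul,
    intervalIntegral.integral_of_le two_pi_pos.le]
  rw [integral_const_mul, integral_integral_swap (hν.integrable_log_norm_circleMap_sub hint r)]

theorem circleAverage_logPot (hν : IsRotationInvariant ν) {r : ℝ} (hr : 0 ≤ r) :
    circleAverage (logPot ν) 0 r = logPot ν r :=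
  circleAverage_const_on_circle fun z hz => by
    rw [hν.logPot_eq_logPot_norm, mem_sphere_zero_iff_norm.mp hz, abs_of_nonneg hr]

theorem logPot_ofReal_eq_integral_log_max [SFinite ν] (hν : IsRotationInvariant ν)
    (hint : ∀ z : ℂ, Integrable (fun w => log ‖z - w‖) ν) {r : ℝ} (hr : 0 < r) :
    logPot ν r = ∫ w, log (max r ‖w‖) ∂ν := by
  rw [← hν.circleAverage_logPot hr.le, hν.circleAverage_logPot_eq_integral hint]
  simp_rw [circleAverage_log_norm_sub_const_eq_log_max hr]

end IsRotationInvariant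

section LogMoment

variable {μ : Measure ℂ}

theorem integrable_log_max_norm [IsFiniteMeasure μ] (h : Integrable (fun w => log ‖w‖) μ)
    (r : ℝ) : Integrable (fun w => log (max r ‖w‖)) μ := by
  refine ((integrable_const |log r|).add h.abs).mono'
    (Measurable.aestronglyMeasurable (by fun_prop)) (ae_of_all _ fun w => ?_)
  rw [norm_eq_abs]
  rcases max_choice r ‖w‖ with hmax | hmax <;> rw [hmax] <;> simp [abs_nonneg]

theorem integral_log_max_one_sub_integral_log_max_le [IsFiniteMeasure μ]
    (h : Integrable (fun w => log ‖w‖) μ) {r : ℝ} (hr0 : 0 < r) (hr1 : r ≤ 1) :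
    ∫ w, log (max 1 ‖w‖) ∂μ - ∫ w, log (max r ‖w‖) ∂μ ≤ μ.real (ball 0 1) * -log r := by
  rw [← integral_sub (integrable_log_max_norm h 1) (integrable_log_max_norm h r),
    ← smul_eq_mul, ← integral_indicator_const _ measurableSet_ball]
  refine integral_mono ((integrable_log_max_norm h 1).sub (integrable_log_max_norm h r))
    ((integrable_const _).indicator measurableSet_ball) fun w => ?_
  by_cases hw : ‖w‖ < 1
  · rw [Set.indicator_of_mem (mem_ball_zero_iff.2 hw), max_eq_left hw.le, log_one, zero_sub]
    exact neg_le_neg (log_le_log hr0 (le_max_left _ _))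
  · rw [Set.indicator_of_notMem (by simpa using hw), not_lt.1 hw |> max_eq_right,
      max_eq_right (hr1.trans (not_lt.1 hw)), sub_self]

theorem integral_log_max_one_norm_eq_of_ball_null (h : μ (ball 0 1) = 0) :
    ∫ w, log (max 1 ‖w‖) ∂μ = ∫ w, log ‖w‖ ∂μ := by
  refine integral_congr_ae ((measure_eq_zero_iff_ae_notMem.1 h).mono fun w hw => ?_)
  dsimp only
  rw [max_eq_right (by simpa using hw)]

theorem integrable_posLog_norm (h : Integrable (fun w => log ‖w‖) μ) :
    Integrable (fun w => log⁺ ‖w‖) μ :=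
  h.abs.mono' (Measurable.aestronglyMeasurable (by fun_prop)) (ae_of_all _ fun w => by
    rw [norm_of_nonneg posLog_nonneg, posLog_apply]
    exact max_le (abs_nonneg _) (le_abs_self _))

end LogMoment

section Potential

variable {ν : Measure ℂ} [IsProbabilityMeasure ν]

theorem logPot_le_log_two_add_posLog (hint : ∀ z : ℂ, Integrable (fun w => log ‖z - w‖) ν)
    (z : ℂ) :
    logPot ν z ≤ log 2 + log⁺ ‖z‖ + ∫ w, log⁺ ‖w‖ ∂ν := by
  have hpos : Integrable (fun w => log⁺ ‖w‖) ν :=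
    integrable_posLog_norm (by simpa using hint 0)
  calc logPot ν z ≤ ∫ w, (log 2 + log⁺ ‖z‖ + log⁺ ‖w‖) ∂ν :=
        integral_mono (hint z) ((integrable_const _).add hpos) fun w =>
          (le_max_right _ _).trans
            ((posLog_le_posLog (norm_nonneg _) (norm_sub_le z w)).trans posLog_add)
    _ = log 2 + log⁺ ‖z‖ + ∫ w, log⁺ ‖w‖ ∂ν := by
        rw [integral_add (integrable_const _) hpos, integral_const, probReal_univ, one_smul]

theorem bddAbove_range_logPot_sub_sq_div (hint : ∀ z : ℂ, Integrable (fun w => log ‖z - w‖) ν)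
    {α : ℝ} (hα : 0 < α) : BddAbove (Set.range fun w => logPot ν w - ‖w‖ ^ 2 / (2 * α)) := by
  refine ⟨log 2 + (∫ w, log⁺ ‖w‖ ∂ν) + α / 2, ?_⟩
  rintro _ ⟨w, rfl⟩
  have hpot := logPot_le_log_two_add_posLog hint w
  have hposLog : log⁺ ‖w‖ ≤ ‖w‖ := max_le (norm_nonneg w) (log_le_self (norm_nonneg w))
  have hquad : ‖w‖ - ‖w‖ ^ 2 / (2 * α) ≤ α / 2 := by
    rw [sub_le_comm, le_div_iff₀ (by positivity)]
    nlinarith [sq_nonneg (‖w‖ - α)]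
  dsimp only
  linarith

end Potential

theorem gfun_bound_on_unit_circle_general (α p q : ℝ) (hα : 0 < α)
    (hp : p ∈ Set.Ico (0 : ℝ) 1)
    (hrel : q * (Real.log q - 1) = p * (Real.log p - 1))
    (ν : Measure ℂ) [IsProbabilityMeasure ν]
    (hrad : ∀ θ : ℝ, Measure.map (fun w => Complex.exp (θ * Complex.I) * w) ν = ν)
    (hint : ∀ z : ℂ, Integrable (fun w => Real.log ‖z - w‖) ν)
    (hmass : ν (Metric.ball (0 : ℂ) 1) ≤ ENNReal.ofReal (p / α)) :
    ∀ z : ℂ, ‖z‖ = 1 →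
      logPot ν z - ‖z‖ ^ 2 / (2 * α) -
          (2 * ⨆ w : ℂ, (logPot ν w - ‖w‖ ^ 2 / (2 * α))) / 2 ≤
        q * (1 - Real.log q) / (2 * α) - 1 / (2 * α) := by
  intro z hz
  have hsup := le_ciSup (bddAbove_range_logPot_sub_sq_div hint hα)
  have hlog : Integrable (fun w => log ‖w‖) ν := by simpa using hint 0
  have hU1 : logPot ν z = ∫ w, log (max 1 ‖w‖) ∂ν := by
    rw [IsRotationInvariant.logPot_eq_logPot_norm hrad, hz,
      IsRotationInvariant.logPot_ofReal_eq_integral_log_max hrad hint one_pos]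
  have hpq : q * (1 - log q) = p * (1 - log p) := by linarith
  rw [hz, hpq, hU1, one_pow, mul_div_cancel_left₀ _ two_ne_zero]
  rcases hp.1.eq_or_lt with rfl | hp0
  · have hU0 : logPot ν 0 = ∫ w, log ‖w‖ ∂ν := by simp [logPot]
    have h0 := hsup 0
    rw [hU0, norm_zero, zero_pow two_ne_zero, zero_div, sub_zero] at h0
    rw [integral_log_max_one_norm_eq_of_ball_null (by simpa using hmass), zero_mul, zero_div]
    linarith
  · have hr : 0 < √p := sqrt_pos.2 hp0
    have hUr := hsup (√p : ℂ)
    rw [IsRotationInvariant.logPot_ofReal_eq_integral_log_max hrad hint hr, Complex.norm_real,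
      norm_of_nonneg hr.le, sq_sqrt hp.1] at hUr
    have hdiff := integral_log_max_one_sub_integral_log_max_le hlog hr (sqrt_le_one.2 hp.2.le)
    have hm : ν.real (ball 0 1) * -log √p ≤ p / α * -log √p :=
      mul_le_mul_of_nonneg_right (ENNReal.toReal_le_of_le_ofReal (by positivity) hmass)
        (neg_nonneg.2 (log_nonpos hr.le (sqrt_le_one.2 hp.2.le)))
    have hval : p / α * -log √p + p / (2 * α) = p * (1 - log p) / (2 * α) := by
      rw [log_sqrt hp.1]; field_simp; ring
    linarith

/-- Let `α > 0`, `p ∈ [0,1)`, and `q ∈ (1, α)` satisfy `q(log q − 1) = p(log p − 1)`.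
For any radially symmetric, compactly supported probability measure `ν` on `ℂ` with
`ν(D) ≤ p/α` (where `D` is the open unit disk), setting
`B_α(ν) = 2 sup_w {U_ν(w) − |w|²/(2α)}` and `g_ν(z) = U_ν(z) − |z|²/(2α) − B_α(ν)/2`,
for every `z` with `|z| = 1` we have `g_ν(z) ≤ q(1 − log q)/(2α) − 1/(2α)`. -/
theorem gfun_bound_on_unit_circle (α p q : ℝ) (hα : 0 < α)
    (hp : p ∈ Set.Ico (0 : ℝ) 1) (hq : q ∈ Set.Ioo 1 α)
    (hrel : q * (Real.log q - 1) = p * (Real.log p - 1))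
    (ν : Measure ℂ) [IsProbabilityMeasure ν]
    (hcomp : ∃ R : ℝ, ν (Metric.closedBall 0 R)ᶜ = 0)
    (hrad : ∀ θ : ℝ, Measure.map (fun w => Complex.exp (θ * Complex.I) * w) ν = ν)
    (hint : ∀ z : ℂ, Integrable (fun w => Real.log ‖z - w‖) ν)
    (hmass : ν (Metric.ball (0 : ℂ) 1) ≤ ENNReal.ofReal (p / α)) :
    ∀ z : ℂ, ‖z‖ = 1 →
      logPot ν z - ‖z‖ ^ 2 / (2 * α) -
          (2 * ⨆ w : ℂ, (logPot ν w - ‖w‖ ^ 2 / (2 * α))) / 2 ≤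
        q * (1 - Real.log q) / (2 * α) - 1 / (2 * α) :=
  gfun_bound_on_unit_circle_general α p q hα hp hrel ν hrad hint hmass
end
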